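/- Let θ > 0 irrational with convergents p_n/q_n, and let p, q be positive integers with gcd(p,q)=1 such that p/q is not a convergent of θ and p/q < θ and p_0/q_0 < p/q. Then there exists a unique n with p_n/q_n < p/q < p_{n+2}/q_{n+2} where also p_n/q_n < p/q < p_{n+1}/q_{n+1}, and for all t ∈ ℝ, (q_{n+1} + θ p_{n+1})²e^{-t} + e^t(p_{n+1} - θ q_{n+1})² < (q + θ p)²e^{-t} + e^t(p - θ q)². -/

import Mathlib

/-! Between the neighbouring convergents `p_n/q_n < p_{n+1}/q_{n+1}` (`n` even, so
`p_{n+1} q_n - p_n q_{n+1} = 1`) every fraction `p/q` is a combination of the two with positive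
integer coefficients, hence `q > q_{n+1}` and `p ≥ p_{n+1}`: this bounds the `e^{-t}` term.
For the `e^t` term, `|p_{n+1} - θ q_{n+1}| < 1/q_{n+2}`, whereas `p/q < p_{n+2}/q_{n+2} < θ` and
`q p_{n+2} - p q_{n+2} ≥ 1` give `θ q - p > 1/q_{n+2}`. The index `n` is the unique even one with
`p_n/q_n < p/q < p_{n+2}/q_{n+2}`; it exists because the even convergents increase strictly to
`θ`, and no odd `n` qualifies because odd convergents lie above `θ`. -/

/-- Data of the continued fraction expansion of `θ`: elements `a`, complete
quotients `x`, and convergents `p n / q n` given by the standard recursions. -/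
structure CFData (θ : ℝ) where
  a : ℕ → ℤ
  x : ℕ → ℝ
  p : ℕ → ℤ
  q : ℕ → ℤ
  x_zero : x 0 = θ
  a_floor : ∀ n, a n = ⌊x n⌋
  x_succ : ∀ n, x (n + 1) = 1 / (x n - a n)
  p_zero : p 0 = a 0
  q_zero : q 0 = 1
  p_one : p 1 = a 1 * a 0 + 1
  q_one : q 1 = a 1
  p_rec : ∀ n, p (n + 2) = a (n + 2) * p (n + 1) + p n
  q_rec : ∀ n, q (n + 2) = a (n + 2) * q (n + 1) + q n

open Filter Topology

theorem StrictMono.existsUnique_lt_lt_succ {α : Type*} [LinearOrder α] {f : ℕ → α}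
    (hf : StrictMono f) {r : α} (h0 : f 0 < r) (hr : ∃ k, r < f k) (hne : ∀ k, f k ≠ r) :
    ∃! j, f j < r ∧ r < f (j + 1) := by
  classical
  obtain ⟨j, hj⟩ : ∃ j, f j < r ∧ r < f (j + 1) := by
    have hpos : Nat.find hr ≠ 0 := fun h => (h ▸ Nat.find_spec hr).not_gt h0
    refine ⟨Nat.find hr - 1, ?_, ?_⟩
    · exact (not_lt.1 (Nat.find_min hr (by omega))).lt_of_ne (hne _)
    · rw [Nat.sub_add_cancel (Nat.pos_of_ne_zero hpos)]
      exact Nat.find_spec hr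
  refine ⟨j, hj, fun i hi => ?_⟩
  have hij : i < j + 1 := hf.lt_iff_lt.1 (hi.1.trans hj.2)
  have hji : j < i + 1 := hf.lt_iff_lt.1 (hj.1.trans hi.2)
  omega

theorem Int.mul_lt_mul_of_div_lt_div {a b p q : ℤ} (hb : 0 < b) (hq : 0 < q)
    (h : (a : ℝ) / b < p / q) : a * q < p * b := by
  rw [div_lt_div_iff₀ (by exact_mod_cast hb) (by exact_mod_cast hq)] at h
  exact_mod_cast h

theorem exists_one_le_coeffs_of_det_eq_one {a b c d p q : ℤ} (hdet : c * b - a * d = 1)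
    (h₁ : a * q < p * b) (h₂ : p * d < c * q) :
    ∃ α β : ℤ, 1 ≤ α ∧ 1 ≤ β ∧ p = α * a + β * c ∧ q = α * b + β * d :=
  ⟨c * q - p * d, p * b - a * q, by linarith, by linarith,
    by linear_combination (-p) * hdet, by linear_combination (-q) * hdet⟩

theorem add_mul_lt_add_mul_of_det_eq_one {θ : ℝ} (hθ : 0 ≤ θ) {a b c d p q : ℤ}
    (hdet : c * b - a * d = 1) (ha : 0 ≤ a) (hb : 0 < b) (hd : 0 ≤ d)
    (h₁ : a * q < p * b) (h₂ : p * d < c * q) :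
    (d : ℝ) + θ * c < q + θ * p := by
  obtain ⟨α, β, hα, hβ, rfl, rfl⟩ := exists_one_le_coeffs_of_det_eq_one hdet h₁ h₂
  have hdq : d < α * b + β * d := by nlinarith
  have hcp : c ≤ α * a + β * c := by nlinarith
  have hdq' : (d : ℝ) < (α * b + β * d : ℤ) := by exact_mod_cast hdq
  have hcp' : (c : ℝ) ≤ (α * a + β * c : ℤ) := by exact_mod_cast hcp
  linarith [mul_le_mul_of_nonneg_left hcp' hθ]

theorem one_div_lt_mul_sub_of_lt {θ : ℝ} {c d p q : ℤ} (hd : 0 < d) (hq : 0 < q)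
    (h : p * d < c * q) (hθ : (c : ℝ) / d < θ) : 1 / (d : ℝ) < θ * q - p := by
  have hd' : (0 : ℝ) < d := by exact_mod_cast hd
  have hq' : (0 : ℝ) < q := by exact_mod_cast hq
  have hgap : (1 : ℝ) ≤ c * q - p * d := by exact_mod_cast (by linarith : 1 ≤ c * q - p * d)
  calc 1 / (d : ℝ) ≤ (c * q - p * d) / d := div_le_div_of_nonneg_right hgap hd'.le
    _ = c / d * q - p := by field_simp
    _ < θ * q - p := by gcongr

theorem sq_mul_exp_add_lt {A A' B B' : ℝ} (hA : 0 ≤ A) (hAA' : A < A') (hBB' : |B| < |B'|)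
    (t : ℝ) :
    A ^ 2 * Real.exp (-t) + Real.exp t * B ^ 2 < A' ^ 2 * Real.exp (-t) + Real.exp t * B' ^ 2 := by
  have hA2 : A ^ 2 < A' ^ 2 := pow_lt_pow_left₀ hAA' hA two_ne_zero
  have hB2 : B ^ 2 < B' ^ 2 := sq_lt_sq.2 hBB'
  have := mul_lt_mul_of_pos_right hA2 (Real.exp_pos (-t))
  have := mul_lt_mul_of_pos_left hB2 (Real.exp_pos t)
  linarith

namespace CFData

variable {θ : ℝ} (c : CFData θ)

theorem irrational_x (hirr : Irrational θ) (n : ℕ) : Irrational (c.x n) := by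
  induction n with
  | zero => rwa [c.x_zero]
  | succ n ih =>
    rw [c.x_succ, one_div, c.a_floor]
    exact (ih.sub_intCast _).inv

theorem a_lt_x (hirr : Irrational θ) (n : ℕ) : (c.a n : ℝ) < c.x n := by
  rw [c.a_floor]
  exact (Int.floor_le _).lt_of_ne fun h => (c.irrational_x hirr n).ne_int _ h.symm

theorem x_sub_a_lt_one (n : ℕ) : c.x n - c.a n < 1 := by
  rw [c.a_floor]
  linarith [Int.lt_floor_add_one (c.x n)]

theorem x_succ_mul_sub (hirr : Irrational θ) (n : ℕ) : c.x (n + 1) * (c.x n - c.a n) = 1 := by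
  rw [c.x_succ, one_div, inv_mul_cancel₀ (sub_pos.2 (c.a_lt_x hirr n)).ne']

theorem one_lt_x_succ (hirr : Irrational θ) (n : ℕ) : 1 < c.x (n + 1) := by
  rw [c.x_succ, one_div]
  exact one_lt_inv₀ (sub_pos.2 (c.a_lt_x hirr n)) |>.2 (c.x_sub_a_lt_one n)

theorem one_le_a_succ (hirr : Irrational θ) (n : ℕ) : 1 ≤ c.a (n + 1) := by
  rw [c.a_floor, Int.le_floor]
  exact_mod_cast (c.one_lt_x_succ hirr n).le

theorem one_le_q (hirr : Irrational θ) (n : ℕ) : 1 ≤ c.q n := by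
  induction n using Nat.twoStepInduction with
  | zero => rw [c.q_zero]
  | one => rw [c.q_one]; exact c.one_le_a_succ hirr 0
  | more n h0 h1 =>
    rw [c.q_rec]
    nlinarith [c.one_le_a_succ hirr (n + 1)]

theorem natCast_le_q (hirr : Irrational θ) (n : ℕ) : (n : ℤ) ≤ c.q n := by
  induction n with
  | zero => push_cast; linarith [c.one_le_q hirr 0]
  | succ n ih =>
    cases n with
    | zero => simpa using c.one_le_q hirr 1
    | succ n =>
      rw [c.q_rec]
      push_cast at ih ⊢
      nlinarith [c.one_le_a_succ hirr (n + 1), c.one_le_q hirr n]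

theorem p_nonneg (hθ : 0 < θ) (hirr : Irrational θ) (n : ℕ) : 0 ≤ c.p n := by
  have ha0 : 0 ≤ c.a 0 := by
    rw [c.a_floor, c.x_zero, Int.floor_nonneg]; exact hθ.le
  induction n using Nat.twoStepInduction with
  | zero => rwa [c.p_zero]
  | one => rw [c.p_one]; nlinarith [c.one_le_a_succ hirr 0]
  | more n h0 h1 =>
    rw [c.p_rec]
    nlinarith [c.one_le_a_succ hirr (n + 1)]

theorem det_eq (n : ℕ) : c.p (n + 1) * c.q n - c.p n * c.q (n + 1) = (-1) ^ n := by
  induction n with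
  | zero => rw [c.p_zero, c.q_zero, c.p_one, c.q_one]; ring
  | succ n ih =>
    rw [c.p_rec, c.q_rec, pow_succ]
    linear_combination (-1 : ℤ) * ih

theorem det_two_eq (n : ℕ) :
    c.p (n + 2) * c.q n - c.p n * c.q (n + 2) = c.a (n + 2) * (-1) ^ n := by
  rw [c.p_rec, c.q_rec]
  linear_combination c.a (n + 2) * c.det_eq n

/-- `θ = (x (n+2) p (n+1) + p n) / (x (n+2) q (n+1) + q n)`, cleared of denominators. -/
theorem x_mul_p_sub_add_p_sub_eq_zero (hirr : Irrational θ) (n : ℕ) :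
    c.x (n + 2) * (c.p (n + 1) - θ * c.q (n + 1)) + (c.p n - θ * c.q n) = 0 := by
  induction n with
  | zero =>
    have h1 : c.x 1 * (θ - c.a 0) = 1 := by simpa [c.x_zero] using c.x_succ_mul_sub hirr 0
    have h2 : c.x 2 * (c.x 1 - c.a 1) = 1 := c.x_succ_mul_sub hirr 1
    have hx1 : c.x 1 ≠ 0 := (zero_lt_one.trans (c.one_lt_x_succ hirr 0)).ne'
    rw [c.p_zero, c.q_zero, c.p_one, c.q_one]
    refine (mul_eq_zero.1 ?_).resolve_left hx1
    push_cast
    linear_combination (-c.x 2 * c.a 1 - 1) * h1 + h2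
  | succ n ih =>
    rw [c.p_rec, c.q_rec]
    push_cast
    linear_combination
      c.x (n + 3) * ih - (c.p (n + 1) - θ * c.q (n + 1)) * c.x_succ_mul_sub hirr (n + 2)

theorem p_sub_mul_eq_neg_one_pow (hirr : Irrational θ) (n : ℕ) :
    (c.p (n + 1) - θ * c.q (n + 1)) * (c.x (n + 2) * c.q (n + 1) + c.q n) = (-1) ^ n := by
  have hdet : ((c.p (n + 1) * c.q n - c.p n * c.q (n + 1) : ℤ) : ℝ) = (-1) ^ n := by
    rw [c.det_eq]; push_cast; rfl
  push_cast at hdet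
  linear_combination c.q (n + 1) * c.x_mul_p_sub_add_p_sub_eq_zero hirr n + hdet

theorem q_lt_x_mul_q_add_q (hirr : Irrational θ) (n : ℕ) :
    (c.q (n + 2) : ℝ) < c.x (n + 2) * c.q (n + 1) + c.q n := by
  have hq : (1 : ℝ) ≤ c.q (n + 1) := by exact_mod_cast c.one_le_q hirr (n + 1)
  rw [c.q_rec]
  push_cast
  nlinarith [c.a_lt_x hirr (n + 2)]

theorem q_pos (hirr : Irrational θ) (n : ℕ) : 0 < c.q n := c.one_le_q hirr n

theorem cast_q_pos (hirr : Irrational θ) (n : ℕ) : (0 : ℝ) < c.q n :=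
  Int.cast_pos.2 (c.q_pos hirr n)

theorem abs_p_sub_mul_q_lt (hirr : Irrational θ) (n : ℕ) :
    |(c.p (n + 1) : ℝ) - θ * c.q (n + 1)| < 1 / c.q (n + 2) := by
  have hD := c.q_lt_x_mul_q_add_q hirr n
  have hD₀ := c.cast_q_pos hirr (n + 2)
  have h := congrArg abs (c.p_sub_mul_eq_neg_one_pow hirr n)
  rw [abs_mul, abs_of_pos (hD₀.trans hD), abs_pow, abs_neg, abs_one, one_pow] at h
  rw [eq_div_of_mul_eq (hD₀.trans hD).ne' h]
  exact one_div_lt_one_div_of_lt hD₀ hD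

theorem convergent_lt_of_even (hirr : Irrational θ) {n : ℕ} (hn : Even n) :
    (c.p n : ℝ) / c.q n < θ := by
  rw [div_lt_iff₀ (c.cast_q_pos hirr n)]
  rcases n with _ | m
  · simpa [c.p_zero, c.q_zero, c.x_zero] using c.a_lt_x hirr 0
  · have h := c.p_sub_mul_eq_neg_one_pow hirr m
    have hm : Odd m := Nat.not_even_iff_odd.1 (Nat.even_add_one.1 hn)
    rw [hm.neg_one_pow] at h
    have hD := (c.cast_q_pos hirr (m + 2)).trans (c.q_lt_x_mul_q_add_q hirr m)
    nlinarith

theorem lt_convergent_of_odd (hirr : Irrational θ) {n : ℕ} (hn : Odd n) :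
    θ < (c.p n : ℝ) / c.q n := by
  rw [lt_div_iff₀ (c.cast_q_pos hirr n)]
  obtain ⟨m, rfl⟩ : ∃ m, n = m + 1 := ⟨n - 1, by obtain ⟨k, hk⟩ := hn; omega⟩
  have h := c.p_sub_mul_eq_neg_one_pow hirr m
  have hm : Even m := not_not.1 (Nat.even_add_one.not.1 (Nat.not_even_iff_odd.2 hn))
  rw [hm.neg_one_pow] at h
  have hD := (c.cast_q_pos hirr (m + 2)).trans (c.q_lt_x_mul_q_add_q hirr m)
  nlinarith

theorem abs_convergent_sub_lt (hirr : Irrational θ) (n : ℕ) :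
    |(c.p n : ℝ) / c.q n - θ| < 1 / (n + 1) := by
  rcases n with _ | m
  · rw [c.p_zero, c.q_zero, c.a_floor, c.x_zero]
    simp only [Int.cast_one, div_one, Nat.cast_zero, zero_add]
    rw [abs_sub_comm, Int.self_sub_floor, abs_of_nonneg (Int.fract_nonneg θ)]
    exact Int.fract_lt_one θ
  · have hq := c.cast_q_pos hirr (m + 1)
    have hq₁ : (1 : ℝ) ≤ c.q (m + 1) := by exact_mod_cast c.one_le_q hirr (m + 1)
    have hq₂ : ((m + 1 + 1 : ℕ) : ℝ) ≤ c.q (m + 2) := by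
      exact_mod_cast c.natCast_le_q hirr (m + 2)
    calc |(c.p (m + 1) : ℝ) / c.q (m + 1) - θ|
        = |(c.p (m + 1) : ℝ) - θ * c.q (m + 1)| / c.q (m + 1) := by
          rw [div_sub' hq.ne', abs_div, abs_of_pos hq, mul_comm]
      _ ≤ |(c.p (m + 1) : ℝ) - θ * c.q (m + 1)| := div_le_self (abs_nonneg _) hq₁
      _ < 1 / c.q (m + 2) := c.abs_p_sub_mul_q_lt hirr m
      _ ≤ 1 / ((m + 1 : ℕ) + 1) := by
          push_cast at hq₂ ⊢
          exact one_div_le_one_div_of_le (by positivity) hq₂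

theorem tendsto_convergent (hirr : Irrational θ) :
    Tendsto (fun n => (c.p n : ℝ) / c.q n) atTop (𝓝 θ) := by
  rw [tendsto_iff_norm_sub_tendsto_zero]
  exact squeeze_zero (fun _ => norm_nonneg _) (fun n => (c.abs_convergent_sub_lt hirr n).le)
    tendsto_one_div_add_atTop_nhds_zero_nat

theorem strictMono_convergent_two_mul (hirr : Irrational θ) :
    StrictMono fun k => (c.p (2 * k) : ℝ) / c.q (2 * k) := by
  refine strictMono_nat_of_lt_succ fun k => ?_
  have hdet := c.det_two_eq (2 * k)
  rw [(even_two_mul k).neg_one_pow, mul_one] at hdet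
  have ha := c.one_le_a_succ hirr (2 * k + 1)
  have hZ : c.p (2 * k) * c.q (2 * k + 2) < c.p (2 * k + 2) * c.q (2 * k) := by linarith
  rw [mul_add_one, div_lt_div_iff₀ (c.cast_q_pos hirr _) (c.cast_q_pos hirr _)]
  exact_mod_cast hZ

end CFData

theorem stmt_13_general (θ : ℝ) (hθ : 0 < θ) (hirr : Irrational θ) (c : CFData θ)
    (p q : ℤ) (hq : 0 < q)
    (hnotconv : ¬ ∃ n : ℕ, (p : ℝ) / q = (c.p n : ℝ) / c.q n)
    (hlt : (p : ℝ) / q < θ)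
    (h0 : (c.p 0 : ℝ) / c.q 0 < (p : ℝ) / q) :
    ∃ n : ℕ,
      ((c.p n : ℝ) / c.q n < (p : ℝ) / q ∧ (p : ℝ) / q < (c.p (n + 2) : ℝ) / c.q (n + 2)) ∧
      (∀ m : ℕ,
        ((c.p m : ℝ) / c.q m < (p : ℝ) / q ∧ (p : ℝ) / q < (c.p (m + 2) : ℝ) / c.q (m + 2)) →
        m = n) ∧
      (p : ℝ) / q < (c.p (n + 1) : ℝ) / c.q (n + 1) ∧
      ∀ t : ℝ,
        ((c.q (n + 1) : ℝ) + θ * c.p (n + 1)) ^ 2 * Real.exp (-t) +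
            Real.exp t * ((c.p (n + 1) : ℝ) - θ * c.q (n + 1)) ^ 2 <
          ((q : ℝ) + θ * p) ^ 2 * Real.exp (-t) +
            Real.exp t * ((p : ℝ) - θ * q) ^ 2 := by
  have hexists_even : ∃ k, (p : ℝ) / q < c.p (2 * k) / c.q (2 * k) :=
    ((c.tendsto_convergent hirr).comp (strictMono_mul_left_of_pos two_pos).tendsto_atTop
      |>.eventually (lt_mem_nhds hlt)).exists
  obtain ⟨k, ⟨hk₀, hk₂⟩, hk_unique⟩ :=
    (c.strictMono_convergent_two_mul hirr).existsUnique_lt_lt_succ h0 hexists_even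
      fun k h => hnotconv ⟨2 * k, h.symm⟩
  have hk₁ : (p : ℝ) / q < c.p (2 * k + 1) / c.q (2 * k + 1) :=
    hlt.trans (c.lt_convergent_of_odd hirr (odd_two_mul_add_one k))
  refine ⟨2 * k, ⟨hk₀, hk₂⟩, fun m ⟨hm₀, hm₂⟩ => ?_, hk₁, ?_⟩
  · obtain ⟨i, rfl⟩ : 2 ∣ m := even_iff_two_dvd.1 <| by
      by_contra hm
      exact (hm₀.trans hlt).not_gt (c.lt_convergent_of_odd hirr (Nat.not_even_iff_odd.1 hm))
    rw [hk_unique i ⟨hm₀, hm₂⟩]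
  · have hdet : c.p (2 * k + 1) * c.q (2 * k) - c.p (2 * k) * c.q (2 * k + 1) = 1 := by
      rw [c.det_eq, (even_two_mul k).neg_one_pow]
    have hA : (c.q (2 * k + 1) : ℝ) + θ * c.p (2 * k + 1) < q + θ * p :=
      add_mul_lt_add_mul_of_det_eq_one hθ.le hdet (c.p_nonneg hθ hirr _) (c.q_pos hirr _)
        (c.q_pos hirr _).le (Int.mul_lt_mul_of_div_lt_div (c.q_pos hirr _) hq hk₀)
        (Int.mul_lt_mul_of_div_lt_div hq (c.q_pos hirr _) hk₁)
    have hB : |(c.p (2 * k + 1) : ℝ) - θ * c.q (2 * k + 1)| < |(p : ℝ) - θ * q| :=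
      calc _ < 1 / (c.q (2 * k + 2) : ℝ) := c.abs_p_sub_mul_q_lt hirr (2 * k)
        _ < θ * q - p := one_div_lt_mul_sub_of_lt (c.q_pos hirr _) hq
            (Int.mul_lt_mul_of_div_lt_div hq (c.q_pos hirr _) hk₂)
            (c.convergent_lt_of_even hirr ⟨k + 1, by ring⟩)
        _ ≤ |(p : ℝ) - θ * q| := abs_sub_comm (p : ℝ) (θ * q) ▸ le_abs_self _
    have hA₀ : 0 ≤ (c.q (2 * k + 1) : ℝ) + θ * c.p (2 * k + 1) :=
      add_nonneg (c.cast_q_pos hirr _).le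
        (mul_nonneg hθ.le (Int.cast_nonneg (c.p_nonneg hθ hirr _)))
    exact sq_mul_exp_add_lt hA₀ hA hB

theorem stmt_13 (θ : ℝ) (hθ : 0 < θ) (hirr : Irrational θ) (c : CFData θ)
    (p q : ℤ) (hp : 0 < p) (hq : 0 < q) (hcop : IsCoprime p q)
    (hnotconv : ¬ ∃ n : ℕ, (p : ℝ) / q = (c.p n : ℝ) / c.q n)
    (hlt : (p : ℝ) / q < θ)
    (h0 : (c.p 0 : ℝ) / c.q 0 < (p : ℝ) / q) :
    ∃ n : ℕ,
      ((c.p n : ℝ) / c.q n < (p : ℝ) / q ∧ (p : ℝ) / q < (c.p (n + 2) : ℝ) / c.q (n + 2)) ∧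
      (∀ m : ℕ,
        ((c.p m : ℝ) / c.q m < (p : ℝ) / q ∧ (p : ℝ) / q < (c.p (m + 2) : ℝ) / c.q (m + 2)) →
        m = n) ∧
      (p : ℝ) / q < (c.p (n + 1) : ℝ) / c.q (n + 1) ∧
      ∀ t : ℝ,
        ((c.q (n + 1) : ℝ) + θ * c.p (n + 1)) ^ 2 * Real.exp (-t) +
            Real.exp t * ((c.p (n + 1) : ℝ) - θ * c.q (n + 1)) ^ 2 <
          ((q : ℝ) + θ * p) ^ 2 * Real.exp (-t) +
            Real.exp t * ((p : ℝ) - θ * q) ^ 2 :=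
  stmt_13_general θ hθ hirr c p q hq hnotconv hlt h0
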